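/- arXiv:2405.20942 — 3 statements merged into one kernel-verified Lean document; each statement's English description precedes it below -/
import Mathlib

section
/- Let K be a field of characteristic zero and n ≥ 1. The product · on gl(n,K) × gl(n,K) defined by (a₀Iₙ+A₀, a₁Iₙ+A₁)·(b₀Iₙ+B₀, b₁Iₙ+B₁) = (a₀b₀Iₙ + a₀B₀ + b₀A₀ , (a₀b₁ + a₁b₀ + tr(A₀B₁ + A₁B₀) − (2/n)tr(A₀B₀))Iₙ + a₀B₁ + b₀A₁ + A₀B₀ + B₀A₀) (for scalars a₀,a₁,b₀,b₁ ∈ K and traceless A₀,A₁,B₀,B₁ ∈ Mₙ(K)) is associative: (P·Q)·R = P·(Q·R) for all P, Q, R ∈ gl(n,K) × gl(n,K). -/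
/-- The product `·` on `gl(n,K) × gl(n,K)`.  Each matrix `X` is decomposed (uniquely,
in characteristic zero) as `X = x₀Iₙ + X₀` with `x₀ = tr(X)/n` and `X₀` traceless, and
then `(a₀Iₙ+A₀, a₁Iₙ+A₁)·(b₀Iₙ+B₀, b₁Iₙ+B₁) = (a₀b₀Iₙ + a₀B₀ + b₀A₀ ,
(a₀b₁ + a₁b₀ + tr(A₀B₁ + A₁B₀) − (2/n)tr(A₀B₀))Iₙ + a₀B₁ + b₀A₁ + A₀B₀ + B₀A₀)`. -/
noncomputable def glPairMul {K : Type*} [Field K] (n : ℕ)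
    (P Q : Matrix (Fin n) (Fin n) K × Matrix (Fin n) (Fin n) K) :
    Matrix (Fin n) (Fin n) K × Matrix (Fin n) (Fin n) K :=
  let a₀ : K := P.1.trace / n
  let A₀ := P.1 - a₀ • (1 : Matrix (Fin n) (Fin n) K)
  let a₁ : K := P.2.trace / n
  let A₁ := P.2 - a₁ • (1 : Matrix (Fin n) (Fin n) K)
  let b₀ : K := Q.1.trace / n
  let B₀ := Q.1 - b₀ • (1 : Matrix (Fin n) (Fin n) K)
  let b₁ : K := Q.2.trace / n
  let B₁ := Q.2 - b₁ • (1 : Matrix (Fin n) (Fin n) K)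
  ((a₀ * b₀) • (1 : Matrix (Fin n) (Fin n) K) + a₀ • B₀ + b₀ • A₀,
   (a₀ * b₁ + a₁ * b₀ + (A₀ * B₁ + A₁ * B₀).trace
      - (2 / (n : K)) * (A₀ * B₀).trace) • (1 : Matrix (Fin n) (Fin n) K)
     + a₀ • B₁ + b₀ • A₁ + A₀ * B₀ + B₀ * A₀)

/-! Writing each matrix as a scalar plus a traceless part, the product becomes
`(a + A, a' + A') · (b + B, b' + B') = (ab + aB + bA, ab' + a'b + tr(AB' + A'B) + aB' + bA' + J(A, B))`,
where `J(A, B)` is the traceless part of `AB + BA`. Expanding both sides of the associativity law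
by bilinearity, everything matches except `tr(J(A, B) C)` against `tr(A J(B, C))`; for traceless `A`
and `C` these are `tr(ABC) + tr(BAC)` and `tr(ABC) + tr(ACB)`, equal by cyclicity of the trace. -/

namespace Matrix

variable {K m : Type*} [Field K] [Fintype m] [DecidableEq m]

noncomputable def tracelessJordan (A B : Matrix m m K) : Matrix m m K :=
  A * B + B * A - ((2 / (Fintype.card m : K)) * (A * B).trace) • 1

theorem trace_tracelessJordan (hm : (Fintype.card m : K) ≠ 0) (A B : Matrix m m K) :
    (tracelessJordan A B).trace = 0 := by
  simp only [tracelessJordan, trace_sub, trace_add, trace_smul, trace_one,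
    trace_mul_comm B A, smul_eq_mul]
  field_simp
  ring

theorem tracelessJordan_add_left (A B C : Matrix m m K) :
    tracelessJordan (A + B) C = tracelessJordan A C + tracelessJordan B C := by
  simp only [tracelessJordan, Matrix.add_mul, Matrix.mul_add, trace_add]
  module

theorem tracelessJordan_add_right (A B C : Matrix m m K) :
    tracelessJordan A (B + C) = tracelessJordan A B + tracelessJordan A C := by
  simp only [tracelessJordan, Matrix.add_mul, Matrix.mul_add, trace_add]
  module

theorem tracelessJordan_smul_left (c : K) (A B : Matrix m m K) :
    tracelessJordan (c • A) B = c • tracelessJordan A B := by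
  simp only [tracelessJordan, Matrix.smul_mul, Matrix.mul_smul, trace_smul, smul_eq_mul]
  module

theorem tracelessJordan_smul_right (c : K) (A B : Matrix m m K) :
    tracelessJordan A (c • B) = c • tracelessJordan A B := by
  simp only [tracelessJordan, Matrix.smul_mul, Matrix.mul_smul, trace_smul, smul_eq_mul]
  module

theorem trace_tracelessJordan_mul {A C : Matrix m m K} (hA : A.trace = 0)
    (hC : C.trace = 0) (B : Matrix m m K) :
    (tracelessJordan A B * C).trace = (A * tracelessJordan B C).trace := by
  simp only [tracelessJordan, Matrix.sub_mul, Matrix.mul_sub, Matrix.add_mul, Matrix.mul_add,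
    Matrix.smul_mul, Matrix.mul_smul, Matrix.one_mul, Matrix.mul_one, trace_sub, trace_add,
    trace_smul, hA, hC, smul_zero, sub_zero, ← Matrix.mul_assoc, trace_mul_cycle A C B]

theorem trace_smul_one_add (c : K) {C : Matrix m m K} (hC : C.trace = 0) :
    (c • (1 : Matrix m m K) + C).trace = Fintype.card m • c := by
  simp [hC, mul_comm]

theorem exists_eq_smul_one_add_traceless (hm : (Fintype.card m : K) ≠ 0) (X : Matrix m m K) :
    ∃ (x : K) (X₀ : Matrix m m K), X₀.trace = 0 ∧ X = x • 1 + X₀ := by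
  refine ⟨X.trace / Fintype.card m, X - (X.trace / Fintype.card m) • 1, ?_, by abel⟩
  simp only [trace_sub, trace_smul, trace_one, smul_eq_mul]
  field_simp
  ring

end Matrix

open Matrix

section

variable {K : Type*} [Field K] {n : ℕ}

theorem glPairMul_smul_one_add (hn : (n : K) ≠ 0) (a a' b b' : K)
    {A A' B B' : Matrix (Fin n) (Fin n) K}
    (hA : A.trace = 0) (hA' : A'.trace = 0) (hB : B.trace = 0) (hB' : B'.trace = 0) :
    glPairMul n (a • 1 + A, a' • 1 + A') (b • 1 + B, b' • 1 + B') =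
      ((a * b) • 1 + (a • B + b • A),
       (a * b' + a' * b + (A * B' + A' * B).trace) • 1
         + (a • B' + b • A' + tracelessJordan A B)) := by
  simp only [glPairMul, trace_smul_one_add _ hA, trace_smul_one_add _ hA',
    trace_smul_one_add _ hB, trace_smul_one_add _ hB', Fintype.card_fin, nsmul_eq_mul,
    mul_div_cancel_left₀ _ hn, add_sub_cancel_left, tracelessJordan]
  ext1 <;> module

theorem glPairMul_assoc_smul_one_add (hn : (n : K) ≠ 0) (a a' b b' c c' : K)
    {A A' B B' C C' : Matrix (Fin n) (Fin n) K} (hA : A.trace = 0) (hA' : A'.trace = 0)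
    (hB : B.trace = 0) (hB' : B'.trace = 0) (hC : C.trace = 0) (hC' : C'.trace = 0) :
    glPairMul n (glPairMul n (a • 1 + A, a' • 1 + A') (b • 1 + B, b' • 1 + B'))
        (c • 1 + C, c' • 1 + C') =
      glPairMul n (a • 1 + A, a' • 1 + A')
        (glPairMul n (b • 1 + B, b' • 1 + B') (c • 1 + C, c' • 1 + C')) := by
  have traceless_smul_add_smul {X Y : Matrix (Fin n) (Fin n) K} (x y : K) (hX : X.trace = 0)
      (hY : Y.trace = 0) : (x • X + y • Y).trace = 0 := by
    simp [hX, hY]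
  have traceless_jordan_part {X Y Z W : Matrix (Fin n) (Fin n) K} (x y : K) (hX : X.trace = 0)
      (hY : Y.trace = 0) : (x • X + y • Y + tracelessJordan Z W).trace = 0 := by
    simp [hX, hY, trace_tracelessJordan (m := Fin n) (by simpa using hn)]
  rw [glPairMul_smul_one_add hn a a' b b' hA hA' hB hB',
    glPairMul_smul_one_add hn b b' c c' hB hB' hC hC',
    glPairMul_smul_one_add hn _ _ c c' (traceless_smul_add_smul a b hB hA)
      (traceless_jordan_part a b hB' hA') hC hC',
    glPairMul_smul_one_add hn a a' _ _ hA hA' (traceless_smul_add_smul b c hC hB)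
      (traceless_jordan_part b c hC' hB')]
  ext1
  · module
  · simp only [tracelessJordan_add_left, tracelessJordan_add_right, tracelessJordan_smul_left,
      tracelessJordan_smul_right, Matrix.add_mul, Matrix.mul_add, Matrix.smul_mul,
      Matrix.mul_smul, trace_add, trace_smul, smul_eq_mul, trace_tracelessJordan_mul hA hC]
    module

end

/-- Let `K` be a field of characteristic zero and `n ≥ 1`.  The product
`·` on `gl(n,K) × gl(n,K)` is associative: `(P·Q)·R = P·(Q·R)` for all `P, Q, R`. -/
theorem glPairMul_assoc {K : Type*} [Field K] [CharZero K] (n : ℕ) (hn : 1 ≤ n)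
    (P Q R : Matrix (Fin n) (Fin n) K × Matrix (Fin n) (Fin n) K) :
    glPairMul n (glPairMul n P Q) R = glPairMul n P (glPairMul n Q R) := by
  have hn₀ : (n : K) ≠ 0 := Nat.cast_ne_zero.mpr (by omega)
  obtain ⟨P₀, P₁⟩ := P
  obtain ⟨Q₀, Q₁⟩ := Q
  obtain ⟨R₀, R₁⟩ := R
  have decompose := exists_eq_smul_one_add_traceless (K := K) (m := Fin n) (by simpa using hn₀)
  obtain ⟨a, A, hA, rfl⟩ := decompose P₀
  obtain ⟨a', A', hA', rfl⟩ := decompose P₁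
  obtain ⟨b, B, hB, rfl⟩ := decompose Q₀
  obtain ⟨b', B', hB', rfl⟩ := decompose Q₁
  obtain ⟨c, C, hC, rfl⟩ := decompose R₀
  obtain ⟨c', C', hC', rfl⟩ := decompose R₁
  exact glPairMul_assoc_smul_one_add hn₀ a a' b b' c c' hA hA' hB hB' hC hC'
end

section
/- Let K be a field of characteristic zero and n ≥ 1. The semidirect-product bracket {(X,Y),(X',Y')} = ([X,X'] , [X,Y'] + [Y,X']) on gl(n,K) × gl(n,K) (where [·,·] is the matrix commutator) satisfies the Leibniz (Poisson) law with respect to the product ·: for all P, Q, R ∈ gl(n,K) × gl(n,K), {R, P·Q} = {R,P}·Q + P·{R,Q}. -/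
/-- The semidirect-product bracket `{(X,Y),(X',Y')} = ([X,X'], [X,Y'] + [Y,X'])` on
`gl(n,K) × gl(n,K)`, where `[A,B] = AB − BA` is the matrix commutator. -/
def glPairBracket {K : Type*} [Field K] (n : ℕ)
    (P Q : Matrix (Fin n) (Fin n) K × Matrix (Fin n) (Fin n) K) :
    Matrix (Fin n) (Fin n) K × Matrix (Fin n) (Fin n) K :=
  (P.1 * Q.1 - Q.1 * P.1,
   (P.1 * Q.2 - Q.2 * P.1) + (P.2 * Q.1 - Q.1 * P.2))

open Matrix

attribute [local instance] LieRing.ofAssociativeRing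

section Commutator

variable {A : Type*} [Ring A]

theorem lie_mul_eq_lie_mul_add_mul_lie (a b c : A) : ⁅a, b * c⁆ = ⁅a, b⁆ * c + b * ⁅a, c⁆ := by
  simp only [Ring.lie_def, mul_sub, sub_mul, mul_assoc]
  abel

theorem lie_one (a : A) : ⁅a, (1 : A)⁆ = 0 :=
  (Commute.one_right a).lie_eq

end Commutator

namespace Matrix

variable {ι K : Type*} [Fintype ι] [DecidableEq ι] [CommRing K]

theorem trace_lie_mul (R X Y : Matrix ι ι K) :
    trace (⁅R, X⁆ * Y) = -trace (X * ⁅R, Y⁆) := by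
  rw [eq_neg_iff_add_eq_zero, ← trace_add, ← lie_mul_eq_lie_mul_add_mul_lie,
    LieAlgebra.matrix_trace_commutator_zero]

end Matrix

section GlPair

variable {K : Type*} [Field K] {n : ℕ}

local notation "M" => Matrix (Fin n) (Fin n) K

variable (n) in
noncomputable def scalarPart (X : M) : K := X.trace / n

variable (n) in
noncomputable def tracelessPart (X : M) : M := X - scalarPart n X • 1

@[simp]
theorem scalarPart_lie (X Y : M) : scalarPart n ⁅X, Y⁆ = 0 := by
  simp [scalarPart]

@[simp]
theorem tracelessPart_lie (X Y : M) : tracelessPart n ⁅X, Y⁆ = ⁅X, Y⁆ := by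
  simp [tracelessPart]

@[simp]
theorem lie_tracelessPart (X Y : M) : ⁅X, tracelessPart n Y⁆ = ⁅X, Y⁆ := by
  rw [tracelessPart, lie_sub, lie_smul, lie_one, smul_zero, sub_zero]

variable (n) in
noncomputable def glPairMulOfParts (a : K × K) (A : M × M) (b : K × K) (B : M × M) : M × M :=
  ((a.1 * b.1) • 1 + a.1 • B.1 + b.1 • A.1,
   (a.1 * b.2 + a.2 * b.1 + (A.1 * B.2 + A.2 * B.1).trace
      - (2 / (n : K)) * (A.1 * B.1).trace) • 1
     + a.1 • B.2 + b.1 • A.2 + A.1 * B.1 + B.1 * A.1)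

theorem glPairMul_eq_glPairMulOfParts (P Q : M × M) :
    glPairMul n P Q = glPairMulOfParts n (P.map (scalarPart n) (scalarPart n))
      (P.map (tracelessPart n) (tracelessPart n)) (Q.map (scalarPart n) (scalarPart n))
      (Q.map (tracelessPart n) (tracelessPart n)) :=
  rfl

theorem glPairBracket_eq_lie (R P : M × M) :
    glPairBracket n R P = (⁅R.1, P.1⁆, ⁅R.1, P.2⁆ + ⁅R.2, P.1⁆) := by
  simp only [glPairBracket, Ring.lie_def]

theorem glPairBracket_map_tracelessPart (R P : M × M) :
    glPairBracket n R (P.map (tracelessPart n) (tracelessPart n)) = glPairBracket n R P := by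
  simp [glPairBracket_eq_lie]

theorem map_scalarPart_glPairBracket (R P : M × M) :
    (glPairBracket n R P).map (scalarPart n) (scalarPart n) = 0 := by
  simp [glPairBracket_eq_lie, scalarPart, Prod.zero_eq_mk]

theorem map_tracelessPart_glPairBracket (R P : M × M) :
    (glPairBracket n R P).map (tracelessPart n) (tracelessPart n) = glPairBracket n R P := by
  simp [glPairBracket_eq_lie, tracelessPart, scalarPart]

theorem glPairBracket_glPairMulOfParts (R : M × M) (a b : K × K) (A B : M × M) :
    glPairBracket n R (glPairMulOfParts n a A b B)
      = glPairMulOfParts n 0 (glPairBracket n R A) b B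
        + glPairMulOfParts n a A 0 (glPairBracket n R B) := by
  obtain ⟨R₀, R₁⟩ := R
  obtain ⟨a₀, a₁⟩ := a
  obtain ⟨b₀, b₁⟩ := b
  obtain ⟨A₀, A₁⟩ := A
  obtain ⟨B₀, B₁⟩ := B
  simp only [glPairBracket_eq_lie, glPairMulOfParts, Prod.ext_iff, Prod.fst_add, Prod.snd_add,
    Prod.fst_zero, Prod.snd_zero, lie_add, lie_smul, lie_one, smul_zero,
    lie_mul_eq_lie_mul_add_mul_lie]
  constructor
  · module
  · simp only [mul_add, add_mul, trace_add, trace_lie_mul]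
    module

end GlPair

theorem glPairBracket_leibniz_general {K : Type*} [Field K] (n : ℕ)
    (P Q R : Matrix (Fin n) (Fin n) K × Matrix (Fin n) (Fin n) K) :
    glPairBracket n R (glPairMul n P Q)
      = glPairMul n (glPairBracket n R P) Q + glPairMul n P (glPairBracket n R Q) := by
  rw [glPairMul_eq_glPairMulOfParts, glPairBracket_glPairMulOfParts, glPairMul_eq_glPairMulOfParts,
    glPairMul_eq_glPairMulOfParts, map_scalarPart_glPairBracket, map_scalarPart_glPairBracket,
    map_tracelessPart_glPairBracket, map_tracelessPart_glPairBracket,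
    glPairBracket_map_tracelessPart, glPairBracket_map_tracelessPart]

/-- Let `K` be a field of characteristic zero and `n ≥ 1`.  The
semidirect-product bracket on `gl(n,K) × gl(n,K)` satisfies the Leibniz (Poisson) law
with respect to the product `·`: for all `P, Q, R`, `{R, P·Q} = {R,P}·Q + P·{R,Q}`. -/
theorem glPairBracket_leibniz {K : Type*} [Field K] [CharZero K] (n : ℕ) (hn : 1 ≤ n)
    (P Q R : Matrix (Fin n) (Fin n) K × Matrix (Fin n) (Fin n) K) :
    glPairBracket n R (glPairMul n P Q)
      = glPairMul n (glPairBracket n R P) Q + glPairMul n P (glPairBracket n R Q) :=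
  glPairBracket_leibniz_general n P Q R
end

section
/- Let G be a group and K a field of characteristic zero. Let 𝔄 and 𝔅 be (not necessarily associative or unital) K-algebras on which G acts by algebra automorphisms, and let (Vᵢ)_{i∈I} be a family of K-linear G-representations. Suppose 𝔄 = ⊕_{r∈R} 𝔄_r and 𝔅 = ⊕_{x∈X} 𝔅_x are internal direct sums of G-invariant subspaces, with G-equivariant linear isomorphisms τᴬ_r : V_{ε_A(r)} ≅ 𝔄_r and τᴮ_x : V_{ε_B(x)} ≅ 𝔅_x for functions ε_A : R → I, ε_B : X → I. For each triple i₁,i₂,j ∈ I let (m^{i₁,i₂,j}_q)_{q=1,…,d^{i₁,i₂,j}} be a linearly independent finite family of G-equivariant linear maps V_{i₁} ⊗ V_{i₂} → V_j. Assume the multiplication of 𝔄 expands as μᴬ restricted to 𝔄_{r₁}⊗𝔄_{r₂} equals Σ_{s∈R} Σ_q c^{s,q}_{r₁,r₂} · τᴬ_s ∘ m^{ε_A(r₁),ε_A(r₂),ε_A(s)}_q ∘ (τᴬ_{r₁} ⊗ τᴬ_{r₂})⁻¹, and similarly the multiplication of 𝔅 restricted to 𝔅_{x₁}⊗𝔅_{x₂}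 equals Σ_{y∈X} Σ_q d^{y,q}_{x₁,x₂} · τᴮ_y ∘ m^{ε_B(x₁),ε_B(x₂),ε_B(y)}_q ∘ (τᴮ_{x₁} ⊗ τᴮ_{x₂})⁻¹, with only finitely many nonzero coefficients in each expansion. Let φ : 𝔄 → 𝔅 be the G-equivariant linear map determined by φ restricted to 𝔄_r equals Σ_{x∈X_r} f_{x,r} · τᴮ_x ∘ (τᴬ_r)⁻¹, where X_r = {x ∈ X : ε_B(x) = ε_A(r)} and for each r only finitely many f_{x,r} are nonzero. Then φ is an algebra homomorphism (φ(ab) = φ(a)φ(b) for all a,b ∈ 𝔄) if and only if for all r₁,r₂ ∈ R, all y ∈ X, and all q = 1,…,d^{ε_A(r₁),ε_A(r₂),ε_B(y)}: Σ_{s∈R_y} c^{s,q}_{r₁,r₂} f_{y,s} = Σ_{x₁∈X_{r₁}} Σ_{x₂∈X_{r₂}} d^{y,q}_{x₁,x₂} f_{x₁,r₁} f_{x₂,r₂}, where R_y = {s ∈ R : ε_A(s) = ε_B(y)}. -/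
/-! Both sides of `φ (a * b) = φ a * φ b` are bilinear in `(a, b)`, so it suffices to compare them
on pairs `τA r₁ v`, `τA r₂ w`, and two elements of `B` agree once their components along the
decomposition `B = ⊕ 𝔅_y` do. Expanding with the two `G`-tables and the `G`-matrix, the
`𝔅_y`-component of either side is a combination `∑_q α_q • m_q v w` of the bilinear maps
`m_q = m^{εA r₁, εA r₂, εB y}_q`, whose coefficients are the two sides of the stated identity;
by linear independence of the `m_q`, the components agree iff the coefficients do. -/

open Function

namespace DirectSum.IsInternal

variable {K ι M : Type*} [Semiring K] [AddCommMonoid M] [Module K M] [DecidableEq ι]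
  {V : ι → Type*} [∀ i, AddCommMonoid (V i)] [∀ i, Module K (V i)] {τ : ∀ i, V i →ₗ[K] M}

noncomputable def rangeComponent (h : IsInternal fun i => LinearMap.range (τ i))
    (hτ : ∀ i, Injective (τ i)) (i : ι) : M →ₗ[K] V i :=
  (LinearEquiv.ofInjective (τ i) (hτ i)).symm.toLinearMap ∘ₗ DirectSum.component K ι _ i ∘ₗ
    (LinearEquiv.ofBijective (DirectSum.coeLinearMap _) h).symm.toLinearMap

variable (h : IsInternal fun i => LinearMap.range (τ i)) (hτ : ∀ i, Injective (τ i))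

theorem rangeComponent_apply_self (i : ι) (v : V i) : h.rangeComponent hτ i (τ i v) = v := by
  have hv : ((LinearEquiv.ofBijective (DirectSum.coeLinearMap _) h).symm (τ i v) i)
      = LinearEquiv.ofInjective (τ i) (hτ i) v :=
    h.ofBijective_coeLinearMap_of_mem (LinearMap.mem_range_self _ v)
  simp [rangeComponent, ← DirectSum.apply_eq_component, hv]

theorem rangeComponent_apply_of_ne {i j : ι} (hij : i ≠ j) (v : V i) :
    h.rangeComponent hτ j (τ i v) = 0 := by
  simp [rangeComponent, ← DirectSum.apply_eq_component,
    h.ofBijective_coeLinearMap_of_mem_ne hij (LinearMap.mem_range_self _ v)]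

theorem eq_iff_forall_rangeComponent_eq {a b : M} :
    a = b ↔ ∀ i, h.rangeComponent hτ i a = h.rangeComponent hτ i b := by
  refine ⟨fun hab _ => hab ▸ rfl, fun hab => ?_⟩
  refine (LinearEquiv.ofBijective (DirectSum.coeLinearMap _) h).symm.injective
    (DirectSum.ext_component K fun i => ?_)
  simpa [rangeComponent] using hab i

end DirectSum.IsInternal

theorem LinearMap.ext_of_iSup_range_eq_top {K ι M P : Type*} [Semiring K] [AddCommMonoid M]
    [Module K M] [AddCommMonoid P] [Module K P] {V : ι → Type*} [∀ i, AddCommMonoid (V i)]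
    [∀ i, Module K (V i)] {τ : ∀ i, V i →ₗ[K] M} (hτ : ⨆ i, LinearMap.range (τ i) = ⊤)
    {f g : M →ₗ[K] P} (h : ∀ i v, f (τ i v) = g (τ i v)) : f = g := by
  rw [← LinearMap.eqLocus_eq_top, eq_top_iff, ← hτ, iSup_le_iff]
  rintro i _ ⟨v, rfl⟩
  exact h i v

theorem LinearMap.ext₂_of_iSup_range_eq_top {K ι M P : Type*} [CommSemiring K] [AddCommMonoid M]
    [Module K M] [AddCommMonoid P] [Module K P] {V : ι → Type*} [∀ i, AddCommMonoid (V i)]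
    [∀ i, Module K (V i)] {τ : ∀ i, V i →ₗ[K] M} (hτ : ⨆ i, LinearMap.range (τ i) = ⊤)
    {f g : M →ₗ[K] M →ₗ[K] P} (h : ∀ i j v w, f (τ i v) (τ j w) = g (τ i v) (τ j w)) :
    f = g :=
  ext_of_iSup_range_eq_top hτ fun i v => ext_of_iSup_range_eq_top hτ fun j w => h i j v w

theorem finsum_subtype_eq_finsum {α M : Type*} [AddCommMonoid M] {p : α → Prop} {g : α → M}
    (hg : ∀ a, ¬ p a → g a = 0) : ∑ᶠ a : Subtype p, g a = ∑ᶠ a, g a := by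
  rw [finsum_subtype_eq_finsum_cond]
  refine finsum_congr fun a => ?_
  by_cases ha : p a <;> simp [ha, hg]

theorem finsum_sum_smul_comm {α K M : Type*} [Semiring K] [AddCommMonoid M] [Module K M]
    (s : Finset ℕ) (g : α → ℕ → K) (b : ℕ → M) (hg : ∀ q ∈ s, HasFiniteSupport (g · q)) :
    ∑ᶠ a, ∑ q ∈ s, g a q • b q = ∑ q ∈ s, (∑ᶠ a, g a q) • b q := by
  rw [finsum_sum_comm s (fun a q => g a q • b q) fun q hq => (hg q hq).smul_left _]
  exact Finset.sum_congr rfl fun q hq => (finsum_smul' (hg q hq) _).symm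

theorem LinearIndependent.sum_range_smul_eq_iff {K M : Type*} [Semiring K] [AddCommMonoid M]
    [Module K M] {n : ℕ} {b : ℕ → M} (hb : LinearIndependent K fun q : Fin n => b q)
    {α β : ℕ → K} :
    ∑ q ∈ Finset.range n, α q • b q = ∑ q ∈ Finset.range n, β q • b q ↔ ∀ q < n, α q = β q := by
  rw [← Fin.sum_univ_eq_sum_range (fun q => α q • b q),
    ← Fin.sum_univ_eq_sum_range (fun q => β q • b q)]
  refine ⟨fun h q hq => Fintype.linearIndependent_iffₛ.1 hb _ _ h ⟨q, hq⟩, fun h => ?_⟩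
  exact Finset.sum_congr rfl fun q _ => by rw [h q q.2]

theorem Function.support_sum_range_smul_subset {α K M : Type*} [Semiring K] [AddCommMonoid M]
    [Module K M] (n : α → ℕ) (g : α → ℕ → K) (x : α → ℕ → M) :
    support (fun a => ∑ q ∈ Finset.range (n a), g a q • x a q) ⊆ {a | ∃ q < n a, g a q ≠ 0} :=
  fun a ha => by
    obtain ⟨q, hq, hne⟩ := Finset.exists_ne_zero_of_sum_ne_zero ha
    exact ⟨q, Finset.mem_range.1 hq, fun h0 => hne (by rw [h0, zero_smul])⟩

theorem Finset.sum_range_smul_cast {K I : Type*} [Semiring K] {V : I → Type*}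
    [∀ i, AddCommMonoid (V i)] [∀ i, Module K (V i)] (n : I → ℕ) (F : ∀ j, ℕ → V j)
    (a : ℕ → K) {j j' : I} (h : j = j') :
    ∑ q ∈ range (n j), a q • cast (congrArg V h) (F j q) = ∑ q ∈ range (n j'), a q • F j' q := by
  subst h
  rfl

theorem LinearMap.map_finsum₂ {K M N P α β : Type*} [CommSemiring K] [AddCommMonoid M]
    [Module K M] [AddCommMonoid N] [Module K N] [AddCommMonoid P] [Module K P]
    (μ : M →ₗ[K] N →ₗ[K] P) {a : α → M} {b : β → N} (ha : HasFiniteSupport a)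
    (hb : HasFiniteSupport b) : μ (∑ᶠ i, a i) (∑ᶠ j, b j) = ∑ᶠ i, ∑ᶠ j, μ (a i) (b j) :=
  calc μ (∑ᶠ i, a i) (∑ᶠ j, b j) = μ.flip (∑ᶠ j, b j) (∑ᶠ i, a i) := rfl
    _ = ∑ᶠ i, μ (a i) (∑ᶠ j, b j) := map_finsum _ ha
    _ = ∑ᶠ i, ∑ᶠ j, μ (a i) (b j) := finsum_congr fun _ => map_finsum _ hb

theorem Function.HasFiniteSupport.subtype_smul {α K M : Type*} [Zero K] [Zero M]
    [SMulWithZero K M] {h : α → K} (hh : HasFiniteSupport h) (p : α → Prop) (g : Subtype p → M) :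
    HasFiniteSupport fun x : Subtype p => h x.1 • g x :=
  (hh.comp_of_injective Subtype.val_injective).smul_left g

section GTable

variable {K : Type*} [CommSemiring K] {I R X : Type*}
  {V : I → Type*} [∀ i, AddCommMonoid (V i)] [∀ i, Module K (V i)]
  {A B : Type*} [AddCommMonoid A] [Module K A] [AddCommMonoid B] [Module K B]
  {μA : A →ₗ[K] A →ₗ[K] A} {μB : B →ₗ[K] B →ₗ[K] B}
  {εA : R → I} {εB : X → I} {τA : ∀ r, V (εA r) →ₗ[K] A} {τB : ∀ x, V (εB x) →ₗ[K] B}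
  {d : I → I → I → ℕ} {m : ∀ i₁ i₂ j : I, ℕ → (V i₁ →ₗ[K] V i₂ →ₗ[K] V j)}
  {c : R → R → R → ℕ → K} {dd : X → X → X → ℕ → K} {f : X → R → K} {φ : A →ₗ[K] B}
  {π : ∀ x, B →ₗ[K] V (εB x)}

theorem component_map_tauA (hffin : ∀ r : R, {x : X | f x r ≠ 0}.Finite)
    (hφ : ∀ (r : R) (v : V (εA r)),
      φ (τA r v) = ∑ᶠ x : {x : X // εB x = εA r}, f x.1 r • τB x.1 (cast (congrArg V x.2.symm) v))
    (s : R) (y : X) (u : V (εA s)) :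
    π y (φ (τA s u))
      = ∑ᶠ x : {x : X // εB x = εA s}, f x.1 s • π y (τB x.1 (cast (congrArg V x.2.symm) u)) := by
  rw [hφ, map_finsum _ (HasFiniteSupport.subtype_smul (hffin s) _ _)]
  simp only [map_smul]

theorem component_map_tauA_of_eq (hffin : ∀ r : R, {x : X | f x r ≠ 0}.Finite)
    (hφ : ∀ (r : R) (v : V (εA r)),
      φ (τA r v) = ∑ᶠ x : {x : X // εB x = εA r}, f x.1 r • τB x.1 (cast (congrArg V x.2.symm) v))
    (hπ : ∀ x v, π x (τB x v) = v) (hπ' : ∀ x y v, x ≠ y → π y (τB x v) = 0)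
    {s : R} {y : X} (h : εA s = εB y) (u : V (εA s)) :
    π y (φ (τA s u)) = f y s • cast (congrArg V h) u := by
  rw [component_map_tauA hffin hφ, finsum_eq_single _ ⟨y, h.symm⟩, hπ]
  intro x hx
  rw [hπ' _ _ _ fun hxy => hx (Subtype.ext hxy), smul_zero]

theorem component_map_tauA_of_ne (hffin : ∀ r : R, {x : X | f x r ≠ 0}.Finite)
    (hφ : ∀ (r : R) (v : V (εA r)),
      φ (τA r v) = ∑ᶠ x : {x : X // εB x = εA r}, f x.1 r • τB x.1 (cast (congrArg V x.2.symm) v))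
    (hπ' : ∀ x y v, x ≠ y → π y (τB x v) = 0)
    {s : R} {y : X} (h : εA s ≠ εB y) (u : V (εA s)) : π y (φ (τA s u)) = 0 := by
  rw [component_map_tauA hffin hφ]
  refine finsum_eq_zero_of_forall_eq_zero fun x => ?_
  rw [hπ' _ _ _ fun hxy => h (x.2.symm.trans (congrArg εB hxy)), smul_zero]

theorem component_map_mul_tauA
    (hcfin : ∀ r₁ r₂ : R, {s : R | ∃ q < d (εA r₁) (εA r₂) (εA s), c r₁ r₂ s q ≠ 0}.Finite)
    (hμA : ∀ (r₁ r₂ : R) (v : V (εA r₁)) (w : V (εA r₂)),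
      μA (τA r₁ v) (τA r₂ w)
        = ∑ᶠ s : R, ∑ q ∈ Finset.range (d (εA r₁) (εA r₂) (εA s)),
            c r₁ r₂ s q • τA s (m (εA r₁) (εA r₂) (εA s) q v w))
    (hffin : ∀ r : R, {x : X | f x r ≠ 0}.Finite)
    (hφ : ∀ (r : R) (v : V (εA r)),
      φ (τA r v) = ∑ᶠ x : {x : X // εB x = εA r}, f x.1 r • τB x.1 (cast (congrArg V x.2.symm) v))
    (hπ : ∀ x v, π x (τB x v) = v) (hπ' : ∀ x y v, x ≠ y → π y (τB x v) = 0)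
    (r₁ r₂ : R) (y : X) (v : V (εA r₁)) (w : V (εA r₂)) :
    π y (φ (μA (τA r₁ v) (τA r₂ w)))
      = ∑ q ∈ Finset.range (d (εA r₁) (εA r₂) (εB y)),
          (∑ᶠ s : {s : R // εA s = εB y}, c r₁ r₂ s.1 q * f y s.1)
            • m (εA r₁) (εA r₂) (εB y) q v w := by
  rw [hμA, ← LinearMap.comp_apply,
    map_finsum _ ((hcfin r₁ r₂).subset (support_sum_range_smul_subset _ _ _))]
  simp only [LinearMap.comp_apply, map_sum, map_smul]
  rw [← finsum_subtype_eq_finsum fun s hs => Finset.sum_eq_zero fun q _ => by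
    rw [component_map_tauA_of_ne hffin hφ hπ' hs, smul_zero]]
  calc _ = ∑ᶠ s : {s : R // εA s = εB y}, ∑ q ∈ Finset.range (d (εA r₁) (εA r₂) (εB y)),
        (c r₁ r₂ s.1 q * f y s.1) • m (εA r₁) (εA r₂) (εB y) q v w :=
      finsum_congr fun s => by
        simp only [component_map_tauA_of_eq hffin hφ hπ hπ' s.2, smul_smul]
        exact Finset.sum_range_smul_cast (fun j => d (εA r₁) (εA r₂) j)
          (fun j q => m (εA r₁) (εA r₂) j q v w) _ s.2
    _ = _ := by
      refine finsum_sum_smul_comm _ _ _ fun q hq => ?_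
      refine HasFiniteSupport.mul_left (f := fun s : {s : R // εA s = εB y} => c r₁ r₂ s.1 q)
        (((hcfin r₁ r₂).preimage Subtype.val_injective.injOn).subset fun s hs => ?_) _
      exact ⟨q, by rw [s.2]; exact Finset.mem_range.1 hq, hs⟩

theorem component_mul_tauB
    (hddfin : ∀ x₁ x₂ : X,
      {y : X | ∃ q < d (εB x₁) (εB x₂) (εB y), dd x₁ x₂ y q ≠ 0}.Finite)
    (hμB : ∀ (x₁ x₂ : X) (v : V (εB x₁)) (w : V (εB x₂)),
      μB (τB x₁ v) (τB x₂ w)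
        = ∑ᶠ y : X, ∑ q ∈ Finset.range (d (εB x₁) (εB x₂) (εB y)),
            dd x₁ x₂ y q • τB y (m (εB x₁) (εB x₂) (εB y) q v w))
    (hπ : ∀ x v, π x (τB x v) = v) (hπ' : ∀ x y v, x ≠ y → π y (τB x v) = 0)
    {i₁ i₂ : I} {x₁ x₂ : X} (h₁ : εB x₁ = i₁) (h₂ : εB x₂ = i₂) (y : X) (v : V i₁) (w : V i₂) :
    π y (μB (τB x₁ (cast (congrArg V h₁.symm) v)) (τB x₂ (cast (congrArg V h₂.symm) w)))
      = ∑ q ∈ Finset.range (d i₁ i₂ (εB y)), dd x₁ x₂ y q • m i₁ i₂ (εB y) q v w := by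
  subst h₁ h₂
  rw [hμB, map_finsum _ ((hddfin x₁ x₂).subset (support_sum_range_smul_subset _ _ _)),
    finsum_eq_single _ y fun y' hy' => ?_]
  · simp only [map_sum, map_smul, hπ, cast_eq]
  · simp only [map_sum, map_smul, hπ' _ _ _ hy', smul_zero, Finset.sum_const_zero]

theorem component_mul_map_tauA
    (hddfin : ∀ x₁ x₂ : X,
      {y : X | ∃ q < d (εB x₁) (εB x₂) (εB y), dd x₁ x₂ y q ≠ 0}.Finite)
    (hμB : ∀ (x₁ x₂ : X) (v : V (εB x₁)) (w : V (εB x₂)),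
      μB (τB x₁ v) (τB x₂ w)
        = ∑ᶠ y : X, ∑ q ∈ Finset.range (d (εB x₁) (εB x₂) (εB y)),
            dd x₁ x₂ y q • τB y (m (εB x₁) (εB x₂) (εB y) q v w))
    (hffin : ∀ r : R, {x : X | f x r ≠ 0}.Finite)
    (hφ : ∀ (r : R) (v : V (εA r)),
      φ (τA r v) = ∑ᶠ x : {x : X // εB x = εA r}, f x.1 r • τB x.1 (cast (congrArg V x.2.symm) v))
    (hπ : ∀ x v, π x (τB x v) = v) (hπ' : ∀ x y v, x ≠ y → π y (τB x v) = 0)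
    (r₁ r₂ : R) (y : X) (v : V (εA r₁)) (w : V (εA r₂)) :
    π y (μB (φ (τA r₁ v)) (φ (τA r₂ w)))
      = ∑ q ∈ Finset.range (d (εA r₁) (εA r₂) (εB y)),
          (∑ᶠ x₁ : {x₁ : X // εB x₁ = εA r₁}, ∑ᶠ x₂ : {x₂ : X // εB x₂ = εA r₂},
              dd x₁.1 x₂.1 y q * f x₁.1 r₁ * f x₂.1 r₂)
            • m (εA r₁) (εA r₂) (εB y) q v w := by
  rw [hφ, hφ, ← LinearMap.compr₂_apply, LinearMap.map_finsum₂ _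
    (HasFiniteSupport.subtype_smul (hffin r₁) _ _) (HasFiniteSupport.subtype_smul (hffin r₂) _ _)]
  calc _ = ∑ᶠ (x₁ : {x₁ : X // εB x₁ = εA r₁}) (x₂ : {x₂ : X // εB x₂ = εA r₂}),
        ∑ q ∈ Finset.range (d (εA r₁) (εA r₂) (εB y)),
          (dd x₁.1 x₂.1 y q * f x₁.1 r₁ * f x₂.1 r₂) • m (εA r₁) (εA r₂) (εB y) q v w :=
      finsum_congr fun x₁ => finsum_congr fun x₂ => by
        simp only [LinearMap.compr₂_apply, map_smul, LinearMap.smul_apply]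
        rw [component_mul_tauB hddfin hμB hπ hπ' x₁.2 x₂.2, Finset.smul_sum, Finset.smul_sum]
        refine Finset.sum_congr rfl fun q _ => ?_
        rw [smul_smul, smul_smul]
        congr 1
        ring
    _ = ∑ᶠ x₁ : {x₁ : X // εB x₁ = εA r₁}, ∑ q ∈ Finset.range (d (εA r₁) (εA r₂) (εB y)),
          (∑ᶠ x₂ : {x₂ : X // εB x₂ = εA r₂}, dd x₁.1 x₂.1 y q * f x₁.1 r₁ * f x₂.1 r₂)
            • m (εA r₁) (εA r₂) (εB y) q v w :=
      finsum_congr fun x₁ => finsum_sum_smul_comm _ _ _ fun q _ =>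
        HasFiniteSupport.mul_right _ (HasFiniteSupport.comp_of_injective (f := (f · r₂))
          Subtype.val_injective (hffin r₂))
    _ = _ := finsum_sum_smul_comm _ _ _ fun q _ =>
      ((hffin r₁).preimage Subtype.val_injective.injOn).subset fun x₁ hx₁ h0 =>
        hx₁ (finsum_eq_zero_of_forall_eq_zero fun x₂ => by rw [h0, mul_zero, zero_mul])

end GTable

theorem gTable_algebraHom_iff_general
    {K : Type*} [Field K]
    {I R X : Type*} [DecidableEq R] [DecidableEq X]
    (V : I → Type*) [∀ i, AddCommGroup (V i)] [∀ i, Module K (V i)]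
    {A B : Type*} [AddCommGroup A] [Module K A] [AddCommGroup B] [Module K B]
    (μA : A →ₗ[K] A →ₗ[K] A) (μB : B →ₗ[K] B →ₗ[K] B)
    (εA : R → I) (εB : X → I)
    (τA : ∀ r : R, V (εA r) →ₗ[K] A) (τB : ∀ x : X, V (εB x) →ₗ[K] B)
    (hτBinj : ∀ x, Function.Injective (τB x))
    (hAdecomp : DirectSum.IsInternal fun r : R => LinearMap.range (τA r))
    (hBdecomp : DirectSum.IsInternal fun x : X => LinearMap.range (τB x))
    (d : I → I → I → ℕ)
    (m : ∀ i₁ i₂ j : I, ℕ → (V i₁ →ₗ[K] V i₂ →ₗ[K] V j))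
    (hmindep : ∀ i₁ i₂ j : I,
      LinearIndependent K fun q : Fin (d i₁ i₂ j) => m i₁ i₂ j (q : ℕ))
    (c : R → R → R → ℕ → K) (dd : X → X → X → ℕ → K)
    (hcfin : ∀ r₁ r₂ : R,
      {s : R | ∃ q < d (εA r₁) (εA r₂) (εA s), c r₁ r₂ s q ≠ 0}.Finite)
    (hddfin : ∀ x₁ x₂ : X,
      {y : X | ∃ q < d (εB x₁) (εB x₂) (εB y), dd x₁ x₂ y q ≠ 0}.Finite)
    (hμA : ∀ (r₁ r₂ : R) (v : V (εA r₁)) (w : V (εA r₂)),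
      μA (τA r₁ v) (τA r₂ w)
        = ∑ᶠ s : R, ∑ q ∈ Finset.range (d (εA r₁) (εA r₂) (εA s)),
            c r₁ r₂ s q • τA s (m (εA r₁) (εA r₂) (εA s) q v w))
    (hμB : ∀ (x₁ x₂ : X) (v : V (εB x₁)) (w : V (εB x₂)),
      μB (τB x₁ v) (τB x₂ w)
        = ∑ᶠ y : X, ∑ q ∈ Finset.range (d (εB x₁) (εB x₂) (εB y)),
            dd x₁ x₂ y q • τB y (m (εB x₁) (εB x₂) (εB y) q v w))
    (f : X → R → K)
    (hffin : ∀ r : R, {x : X | f x r ≠ 0}.Finite)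
    (φ : A →ₗ[K] B)
    (hφ : ∀ (r : R) (v : V (εA r)),
      φ (τA r v)
        = ∑ᶠ x : {x : X // εB x = εA r},
            f x.1 r • τB x.1 (cast (congrArg V x.2.symm) v)) :
    (∀ a b : A, φ (μA a b) = μB (φ a) (φ b))
      ↔ ∀ (r₁ r₂ : R) (y : X) (q : ℕ), q < d (εA r₁) (εA r₂) (εB y) →
          (∑ᶠ s : {s : R // εA s = εB y}, c r₁ r₂ s.1 q * f y s.1)
            = ∑ᶠ x₁ : {x₁ : X // εB x₁ = εA r₁},
                ∑ᶠ x₂ : {x₂ : X // εB x₂ = εA r₂},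
                  dd x₁.1 x₂.1 y q * f x₁.1 r₁ * f x₂.1 r₂ := by
  have hπ := hBdecomp.rangeComponent_apply_self hτBinj
  have hπ' : ∀ x y v, x ≠ y → hBdecomp.rangeComponent hτBinj y (τB x v) = 0 :=
    fun _ _ v hxy => hBdecomp.rangeComponent_apply_of_ne hτBinj hxy v
  calc (∀ a b : A, φ (μA a b) = μB (φ a) (φ b))
      ↔ ∀ r₁ r₂ v w, φ (μA (τA r₁ v) (τA r₂ w)) = μB (φ (τA r₁ v)) (φ (τA r₂ w)) :=
        ⟨fun h _ _ _ _ => h _ _, fun h => LinearMap.congr_fun₂ (f := μA.compr₂ φ)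
          (g := μB.compl₁₂ φ φ) (LinearMap.ext₂_of_iSup_range_eq_top
            hAdecomp.submodule_iSup_eq_top h)⟩
    _ ↔ ∀ r₁ r₂ y, ∀ v w, hBdecomp.rangeComponent hτBinj y (φ (μA (τA r₁ v) (τA r₂ w)))
          = hBdecomp.rangeComponent hτBinj y (μB (φ (τA r₁ v)) (φ (τA r₂ w))) := by
        simp only [hBdecomp.eq_iff_forall_rangeComponent_eq hτBinj]
        exact ⟨fun h r₁ r₂ y v w => h r₁ r₂ v w y, fun h r₁ r₂ v w y => h r₁ r₂ y v w⟩
    _ ↔ _ := by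
        simp only [component_map_mul_tauA hcfin hμA hffin hφ hπ hπ',
          component_mul_map_tauA hddfin hμB hffin hφ hπ hπ']
        refine forall₃_congr fun r₁ r₂ y => ?_
        rw [← (hmindep _ _ _).sum_range_smul_eq_iff, LinearMap.ext_iff₂]
        simp only [LinearMap.sum_apply, LinearMap.smul_apply]

/-- Let `G` be a group and `K` a field of characteristic zero.  Let
`𝔄` and `𝔅` be (not necessarily associative or unital) `K`-algebras — here encoded as
`K`-modules `A`, `B` together with bilinear multiplications `μA`, `μB` — on which `G`
acts by algebra automorphisms (`ρA`, `ρB`), and let `(V i)_{i ∈ I}` be a family of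
`K`-linear `G`-representations (`ρ`).  Suppose `A = ⊕_{r ∈ R} 𝔄_r` and
`B = ⊕_{x ∈ X} 𝔅_x` are internal direct sums of `G`-invariant subspaces, with
`G`-equivariant linear isomorphisms `τA r : V (εA r) ≅ 𝔄_r` and
`τB x : V (εB x) ≅ 𝔅_x` (encoded as injective equivariant linear maps whose ranges form
an internal direct sum decomposition).  For each `i₁ i₂ j` let
`(m i₁ i₂ j q)_{q < d i₁ i₂ j}` be a linearly independent family of `G`-equivariant
bilinear maps `V i₁ → V i₂ → V j`.  Assume the multiplication `μA` expands on the
components of `A` with coefficients `c` (the `G`-table of `𝔄`), and `μB` expands on the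
components of `B` with coefficients `dd` (the `G`-table of `𝔅`), each expansion having
only finitely many nonzero coefficients.  Let `φ : A →ₗ[K] B` be the `G`-equivariant
linear map determined on components by the `G`-matrix `f` (finitely supported in `x`
for each `r`, and supported on matching indices).  Then `φ` is an algebra homomorphism
iff for all `r₁ r₂ ∈ R`, `y ∈ X` and `q < d (εA r₁) (εA r₂) (εB y)`:
`∑_{s ∈ R_y} c r₁ r₂ s q * f y s
  = ∑_{x₁ ∈ X_{r₁}} ∑_{x₂ ∈ X_{r₂}} dd x₁ x₂ y q * f x₁ r₁ * f x₂ r₂`,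
where `R_y = {s | εA s = εB y}` and `X_r = {x | εB x = εA r}`. -/
theorem gTable_algebraHom_iff
    {K : Type*} [Field K] [CharZero K]
    {G : Type*} [Group G]
    {I R X : Type*} [DecidableEq R] [DecidableEq X]
    (V : I → Type*) [∀ i, AddCommGroup (V i)] [∀ i, Module K (V i)]
    (ρ : ∀ i, G →* (V i ≃ₗ[K] V i))
    {A B : Type*} [AddCommGroup A] [Module K A] [AddCommGroup B] [Module K B]
    (μA : A →ₗ[K] A →ₗ[K] A) (μB : B →ₗ[K] B →ₗ[K] B)
    (ρA : G →* (A ≃ₗ[K] A)) (ρB : G →* (B ≃ₗ[K] B))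
    (hρA : ∀ (g : G) (a b : A), ρA g (μA a b) = μA (ρA g a) (ρA g b))
    (hρB : ∀ (g : G) (a b : B), ρB g (μB a b) = μB (ρB g a) (ρB g b))
    (εA : R → I) (εB : X → I)
    (τA : ∀ r : R, V (εA r) →ₗ[K] A) (τB : ∀ x : X, V (εB x) →ₗ[K] B)
    (hτAinj : ∀ r, Function.Injective (τA r))
    (hτBinj : ∀ x, Function.Injective (τB x))
    (hAdecomp : DirectSum.IsInternal fun r : R => LinearMap.range (τA r))
    (hBdecomp : DirectSum.IsInternal fun x : X => LinearMap.range (τB x))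
    (hτAequiv : ∀ (r : R) (g : G) (v : V (εA r)), ρA g (τA r v) = τA r (ρ (εA r) g v))
    (hτBequiv : ∀ (x : X) (g : G) (v : V (εB x)), ρB g (τB x v) = τB x (ρ (εB x) g v))
    (d : I → I → I → ℕ)
    (m : ∀ i₁ i₂ j : I, ℕ → (V i₁ →ₗ[K] V i₂ →ₗ[K] V j))
    (hmequiv : ∀ (i₁ i₂ j : I) (q : ℕ), q < d i₁ i₂ j →
      ∀ (g : G) (v : V i₁) (w : V i₂),
        m i₁ i₂ j q (ρ i₁ g v) (ρ i₂ g w) = ρ j g (m i₁ i₂ j q v w))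
    (hmindep : ∀ i₁ i₂ j : I,
      LinearIndependent K fun q : Fin (d i₁ i₂ j) => m i₁ i₂ j (q : ℕ))
    (c : R → R → R → ℕ → K) (dd : X → X → X → ℕ → K)
    (hcfin : ∀ r₁ r₂ : R,
      {s : R | ∃ q < d (εA r₁) (εA r₂) (εA s), c r₁ r₂ s q ≠ 0}.Finite)
    (hddfin : ∀ x₁ x₂ : X,
      {y : X | ∃ q < d (εB x₁) (εB x₂) (εB y), dd x₁ x₂ y q ≠ 0}.Finite)
    (hμA : ∀ (r₁ r₂ : R) (v : V (εA r₁)) (w : V (εA r₂)),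
      μA (τA r₁ v) (τA r₂ w)
        = ∑ᶠ s : R, ∑ q ∈ Finset.range (d (εA r₁) (εA r₂) (εA s)),
            c r₁ r₂ s q • τA s (m (εA r₁) (εA r₂) (εA s) q v w))
    (hμB : ∀ (x₁ x₂ : X) (v : V (εB x₁)) (w : V (εB x₂)),
      μB (τB x₁ v) (τB x₂ w)
        = ∑ᶠ y : X, ∑ q ∈ Finset.range (d (εB x₁) (εB x₂) (εB y)),
            dd x₁ x₂ y q • τB y (m (εB x₁) (εB x₂) (εB y) q v w))
    (f : X → R → K)
    (hffin : ∀ r : R, {x : X | f x r ≠ 0}.Finite)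
    (hfsupp : ∀ (x : X) (r : R), f x r ≠ 0 → εB x = εA r)
    (φ : A →ₗ[K] B)
    (hφequiv : ∀ (g : G) (a : A), φ (ρA g a) = ρB g (φ a))
    (hφ : ∀ (r : R) (v : V (εA r)),
      φ (τA r v)
        = ∑ᶠ x : {x : X // εB x = εA r},
            f x.1 r • τB x.1 (cast (congrArg V x.2.symm) v)) :
    (∀ a b : A, φ (μA a b) = μB (φ a) (φ b))
      ↔ ∀ (r₁ r₂ : R) (y : X) (q : ℕ), q < d (εA r₁) (εA r₂) (εB y) →
          (∑ᶠ s : {s : R // εA s = εB y}, c r₁ r₂ s.1 q * f y s.1)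
            = ∑ᶠ x₁ : {x₁ : X // εB x₁ = εA r₁},
                ∑ᶠ x₂ : {x₂ : X // εB x₂ = εA r₂},
                  dd x₁.1 x₂.1 y q * f x₁.1 r₁ * f x₂.1 r₂ :=
  gTable_algebraHom_iff_general V μA μB εA εB τA τB hτBinj hAdecomp hBdecomp d m hmindep c dd hcfin
    hddfin hμA hμB f hffin φ hφ
end
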